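/- arXiv:2103.08296 — 4 statements merged into one kernel-verified Lean document; each statement's English description precedes it below -/
import Mathlib

section
/- If φ : ℝ → ℂ is smooth and satisfies φ'' + 2ρ tanh(t) φ' + (j(j+n-2)/cosh²t) φ = (λ² - ρ²) φ, then the function Φ(t) = (cosh t)^{λ+ρ} φ(t) satisfies Φ'' - 2λ tanh(t) Φ' - ab(1 - tanh²t) Φ = 0, where a = λ+ρ+j and b = λ-ρ+1-j. -/
theorem stmt2 (n : ℕ) (hn : 3 ≤ n) (ρ : ℝ) (hρ : ρ = (n - 1) / 2) (lam : ℂ) (j : ℕ)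
    (φ : ℝ → ℂ) (hφ : ContDiff ℝ (⊤ : ℕ∞) φ)
    (a b : ℂ) (ha : a = lam + ρ + j) (hb : b = lam - ρ + 1 - j)
    (hode : ∀ t : ℝ, deriv (deriv φ) t
        + ((2 * ρ * Real.tanh t : ℝ) : ℂ) * deriv φ t
        + ((j * (j + n - 2) : ℂ) / ((Real.cosh t : ℂ)) ^ 2) * φ t
        = (lam ^ 2 - (ρ : ℂ) ^ 2) * φ t)
    (Φ : ℝ → ℂ) (hΦ : Φ = fun t => ((Real.cosh t : ℂ)) ^ (lam + ρ) * φ t) :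
    ∀ t : ℝ, deriv (deriv Φ) t - 2 * lam * (Real.tanh t : ℂ) * deriv Φ t
      - a * b * (1 - (Real.tanh t : ℂ) ^ 2) * Φ t = 0 := by
  intro t
  have hc0 : ∀ u : ℝ, ((Real.cosh u : ℂ)) ≠ 0 := fun u => by
    exact_mod_cast (Real.cosh_pos u).ne'
  set μ : ℂ := lam + (ρ : ℂ) with hμ
  have hC : ∀ u : ℝ, HasDerivAt (fun x : ℝ => ((Real.cosh x : ℂ))) ((Real.sinh u : ℂ)) u :=
    fun u => (Real.hasDerivAt_cosh u).ofReal_comp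
  have hS : ∀ u : ℝ, HasDerivAt (fun x : ℝ => ((Real.sinh x : ℂ))) ((Real.cosh u : ℂ)) u :=
    fun u => (Real.hasDerivAt_sinh u).ofReal_comp
  have hslit : ∀ u : ℝ, ((Real.cosh u : ℂ)) ∈ Complex.slitPlane := fun u =>
    Complex.ofReal_mem_slitPlane.2 (Real.cosh_pos u)
  have hg : ∀ (ν : ℂ) (u : ℝ), HasDerivAt (fun x : ℝ => ((Real.cosh x : ℂ)) ^ ν)
      (ν * ((Real.cosh u : ℂ)) ^ (ν - 1) * (Real.sinh u : ℂ)) u := by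
    intro ν u
    have h1 : HasDerivAt (fun y : ℝ => ((y : ℂ)) ^ ν)
        (ν * ((Real.cosh u : ℂ)) ^ (ν - 1)) (Real.cosh u) :=
      (Complex.hasStrictDerivAt_cpow_const (hslit u)).hasDerivAt.comp_ofReal
    have h2 := h1.scomp u (Real.hasDerivAt_cosh u)
    refine h2.congr_deriv ?_
    rw [Complex.real_smul]
    ring
  have hφd : ∀ u : ℝ, HasDerivAt φ (deriv φ u) u := fun u =>
    (hφ.differentiable (by simp) u).hasDerivAt
  have hφ' : ContDiff ℝ ((⊤ : ℕ∞) : WithTop ℕ∞) φ := hφ.of_le (by simp)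
  have hφ2 : ContDiff ℝ ((⊤ : ℕ∞) : WithTop ℕ∞) (deriv φ) := (contDiff_infty_iff_deriv.mp hφ').2
  have hφd2 : ∀ u : ℝ, HasDerivAt (deriv φ) (deriv (deriv φ) u) u := fun u =>
    (hφ2.differentiable (by simp) u).hasDerivAt
  have hΦ1 : ∀ u : ℝ, HasDerivAt Φ
      (μ * ((Real.cosh u : ℂ)) ^ (μ - 1) * (Real.sinh u : ℂ) * φ u
        + ((Real.cosh u : ℂ)) ^ μ * deriv φ u) u := by
    intro u
    rw [hΦ]
    exact (hg μ u).mul (hφd u)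
  have hdΦ : deriv Φ = fun u : ℝ =>
      μ * ((Real.cosh u : ℂ)) ^ (μ - 1) * (Real.sinh u : ℂ) * φ u
        + ((Real.cosh u : ℂ)) ^ μ * deriv φ u := funext fun u => (hΦ1 u).deriv
  have hD2 : HasDerivAt (deriv Φ)
      ((μ * ((μ - 1) * ((Real.cosh t : ℂ)) ^ (μ - 1 - 1) * (Real.sinh t : ℂ)) * (Real.sinh t : ℂ)
          + μ * ((Real.cosh t : ℂ)) ^ (μ - 1) * (Real.cosh t : ℂ)) * φ t
        + μ * ((Real.cosh t : ℂ)) ^ (μ - 1) * (Real.sinh t : ℂ) * deriv φ t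
        + (μ * ((Real.cosh t : ℂ)) ^ (μ - 1) * (Real.sinh t : ℂ) * deriv φ t
          + ((Real.cosh t : ℂ)) ^ μ * deriv (deriv φ) t)) t := by
    rw [hdΦ]
    exact ((((hg (μ - 1) t).const_mul μ).mul (hS t)).mul (hφd t)).add ((hg μ t).mul (hφd2 t))
  have e2 := hD2.deriv
  have hP1 : ((Real.cosh t : ℂ)) ^ (μ - 1) = ((Real.cosh t : ℂ)) ^ μ / (Real.cosh t : ℂ) := by
    rw [Complex.cpow_sub _ _ (hc0 t), Complex.cpow_one]
  have hP2 : ((Real.cosh t : ℂ)) ^ (μ - 1 - 1)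
      = ((Real.cosh t : ℂ)) ^ μ / (Real.cosh t : ℂ) / (Real.cosh t : ℂ) := by
    rw [Complex.cpow_sub _ _ (hc0 t), Complex.cpow_one, hP1]
  have hcs : ((Real.cosh t : ℂ)) ^ 2 = ((Real.sinh t : ℂ)) ^ 2 + 1 := by
    exact_mod_cast congrArg (Complex.ofReal) (Real.cosh_sq t)
  have hinv : ((Real.cosh t : ℂ)) / ((Real.cosh t : ℂ)) = 1 := div_self (hc0 t)
  have hn2 : ((n : ℂ)) = 2 * (ρ : ℂ) + 1 := by
    have : (ρ : ℂ) = ((n : ℂ) - 1) / 2 := by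
      rw [hρ]; push_cast; ring
    rw [this]; ring
  have hode' := hode t
  have htanh : ((Real.tanh t : ℝ) : ℂ) = (Real.sinh t : ℂ) / (Real.cosh t : ℂ) := by
    rw [Real.tanh_eq_sinh_div_cosh, Complex.ofReal_div]
  have hco : ((2 * ρ * Real.tanh t : ℝ) : ℂ)
      = 2 * (ρ : ℂ) * ((Real.sinh t : ℂ) / (Real.cosh t : ℂ)) := by
    rw [Complex.ofReal_mul, Complex.ofReal_mul, htanh]; norm_num
  rw [hco, hn2] at hode'
  rw [e2, hdΦ, hΦ]
  beta_reduce
  rw [ha, hb, hP1, hP2, htanh]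
  set c : ℂ := (Real.cosh t : ℂ)
  set s : ℂ := (Real.sinh t : ℂ)
  set u : ℂ := c ^ μ
  have hKc : ((j : ℂ)) * ((j : ℂ) + 2 * (ρ : ℂ) - 1) = (j : ℂ) * ((j : ℂ) + (2 * (ρ : ℂ) + 1) - 2) := by ring
  linear_combination u * hode'
    + (u * μ - u * ((j : ℂ) * ((j : ℂ) + 2 * (ρ : ℂ) - 1)) * (c / c + 1)) * φ t * hinv
    + u * ((j : ℂ) * ((j : ℂ) + 2 * (ρ : ℂ) - 1)) / c ^ 2 * φ t * hcs
end

section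
/- Gauss's theorem on the boundary behavior of the hypergeometric function: if Re(a+b-c) > 0 and a, b are not nonpositive integers, then (1-x)^{a+b-c} F(a,b;c;x) tends to Γ(c)Γ(a+b-c)/(Γ(a)Γ(b)) as x → 1 from the left. -/
noncomputable def poch (a : ℂ) (m : ℕ) : ℂ := (ascPochhammer ℂ m).eval a

noncomputable def hyp (a b c x : ℂ) : ℂ :=
  ∑' m : ℕ, poch a m * poch b m / (m.factorial * poch c m) * x ^ m

/-!
Write `s = a + b - c` and `σ = Re s`. By Euler's limit formula for `Γ`, the `n`-th coefficient
of `F(a, b; c; x)` divided by the `n`-th coefficient `(s)ₙ / n!` of `(1 - x) ^ (-s)` tends to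
`L = Γ(c) Γ(s) / (Γ(a) Γ(b))`. Hence `F(a, b; c; x) = L (1 - x) ^ (-s) + E(x)`, where the
coefficients of `E` are `o((σ)ₙ / n!)` because `|(s)ₙ| = O((σ)ₙ)`. Since the majorant
`∑ (σ)ₙ / n! xⁿ = (1 - x) ^ (-σ)` diverges at `1`, an Abelian argument gives
`E(x) = o((1 - x) ^ (-σ))`, that is, `(1 - x) ^ s E(x) → 0`.
-/

open Filter Topology Asymptotics

theorem Ring.choose_add_natCast_sub_one {K : Type*} [Field K] [CharZero K] (z : K) (n : ℕ) :
    Ring.choose (z + n - 1) n = (ascPochhammer K n).eval z / n.factorial := by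
  rw [eq_div_iff (by exact_mod_cast n.factorial_ne_zero), ← Ring.multichoose_eq, mul_comm,
    ← nsmul_eq_mul, Ring.factorial_nsmul_multichoose_eq_ascPochhammer,
    Polynomial.ascPochhammer_smeval_eq_eval]

theorem ofReal_choose_add_natCast_sub_one (σ : ℝ) (n : ℕ) :
    ((Ring.choose (σ + n - 1) n : ℝ) : ℂ) = poch σ n / n.factorial := by
  push_cast
  exact Ring.choose_add_natCast_sub_one _ n

theorem choose_add_natCast_sub_one_pos {σ : ℝ} (hσ : 0 < σ) (n : ℕ) :
    0 < Ring.choose (σ + n - 1) n := by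
  rw [Ring.choose_add_natCast_sub_one]
  exact div_pos (ascPochhammer_pos n σ hσ) (by positivity)

theorem poch_eq_prod (z : ℂ) (n : ℕ) : poch z n = ∏ j ∈ Finset.range n, (z + j) := by
  induction n with
  | zero => simp [poch]
  | succ n ih =>
    rw [Finset.prod_range_succ, ← ih, poch, poch, ascPochhammer_succ_right, Polynomial.eval_mul]
    simp

theorem ne_neg_natCast_of_re_pos {s : ℂ} (hs : 0 < s.re) (m : ℕ) : s ≠ -m := fun h => by
  have := congrArg Complex.re h
  simp only [Complex.neg_re, Complex.natCast_re] at this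
  linarith [m.cast_nonneg (α := ℝ)]

theorem poch_ne_zero {z : ℂ} (hz : ∀ m : ℕ, z ≠ -m) (n : ℕ) : poch z n ≠ 0 := by
  simp only [poch, ne_eq, ascPochhammer_eval_eq_zero_iff]
  rintro ⟨k, -, hk⟩
  exact hz k (neg_eq_iff_eq_neg.mp hk.symm)

theorem GammaSeq_eq_div_poch (z : ℂ) (n : ℕ) :
    Complex.GammaSeq z n = (n : ℂ) ^ z * n.factorial / poch z (n + 1) := by
  rw [Complex.GammaSeq, poch_eq_prod]

theorem tendsto_poch_div_poch_mul_cpow {z : ℂ} (hz : ∀ m : ℕ, z ≠ -m) (w : ℂ) :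
    Tendsto (fun n : ℕ => poch z (n + 1) / poch w (n + 1) * (n : ℂ) ^ (w - z)) atTop
      (𝓝 (Complex.Gamma w / Complex.Gamma z)) := by
  refine ((Complex.GammaSeq_tendsto_Gamma w).div (Complex.GammaSeq_tendsto_Gamma z)
    (Complex.Gamma_ne_zero hz)).congr' ?_
  filter_upwards [eventually_ne_atTop 0] with n hn
  have hn' : (n : ℂ) ≠ 0 := Nat.cast_ne_zero.mpr hn
  have hf : (n.factorial : ℂ) ≠ 0 := Nat.cast_ne_zero.mpr n.factorial_ne_zero
  rw [Pi.div_apply, GammaSeq_eq_div_poch, GammaSeq_eq_div_poch, div_div_div_eq,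
    Complex.cpow_sub _ _ hn']
  have hz' : (n : ℂ) ^ z ≠ 0 := Complex.cpow_ne_zero_iff.mpr (Or.inl hn')
  field_simp

theorem isBigO_poch_div_factorial {s : ℂ} (hs : 0 < s.re) :
    (fun n : ℕ => poch s n / n.factorial) =O[atTop] fun n => Ring.choose (s.re + n - 1) n := by
  have hlim := (tendsto_poch_div_poch_mul_cpow (ne_neg_natCast_of_re_pos hs) (s.re : ℂ)).norm
  rw [← isBigO_norm_left]
  refine isBigO_of_div_tendsto_nhds (.of_forall fun n hn =>
    absurd hn (choose_add_natCast_sub_one_pos hs n).ne') _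
    ((tendsto_add_atTop_iff_nat 1).mp (hlim.congr' ?_))
  filter_upwards [eventually_ne_atTop 0] with n hn
  have hpow : ‖(n : ℂ) ^ ((s.re : ℂ) - s)‖ = 1 := by
    rw [Complex.norm_natCast_cpow_of_pos (Nat.pos_of_ne_zero hn)]
    simp
  rw [Pi.div_apply, ← Real.norm_of_nonneg (choose_add_natCast_sub_one_pos hs _).le,
    ← Complex.norm_real, ofReal_choose_add_natCast_sub_one, ← norm_div, norm_mul, hpow, mul_one,
    div_div_div_cancel_right₀ (by exact_mod_cast (n + 1).factorial_ne_zero)]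

theorem tendsto_hyp_coeff_div {a b : ℂ} (ha : ∀ m : ℕ, a ≠ -m) (hb : ∀ m : ℕ, b ≠ -m) (c : ℂ) :
    Tendsto (fun n => poch a n * poch b n / (n.factorial * poch c n) /
        (poch (a + b - c) n / n.factorial)) atTop
      (𝓝 (Complex.Gamma c * Complex.Gamma (a + b - c) / (Complex.Gamma a * Complex.Gamma b))) := by
  rw [mul_div_mul_comm, ← tendsto_add_atTop_iff_nat 1]
  refine ((tendsto_poch_div_poch_mul_cpow ha c).mul
    (tendsto_poch_div_poch_mul_cpow hb (a + b - c))).congr' ?_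
  filter_upwards [eventually_ne_atTop 0] with n hn
  rw [mul_mul_mul_comm, ← Complex.cpow_add _ _ (Nat.cast_ne_zero.mpr hn),
    show c - a + (a + b - c - b) = 0 by ring, Complex.cpow_zero, mul_one, div_mul_div_comm,
    mul_comm ((n + 1).factorial : ℂ), ← div_div _ _ ((n + 1).factorial : ℂ),
    div_div_div_cancel_right₀ (Nat.cast_ne_zero.mpr (n + 1).factorial_ne_zero), div_div]

theorem hasSum_poch_div_factorial_mul_pow (z : ℂ) {x : ℂ} (hx : ‖x‖ < 1) :
    HasSum (fun n : ℕ => poch z n / n.factorial * x ^ n) (1 / (1 - x) ^ z) := by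
  have h := (Complex.one_div_one_sub_cpow_hasFPowerSeriesOnBall_zero z).hasSum
    (y := x) (by simpa [enorm_eq_nnnorm, ← NNReal.coe_lt_one] using hx)
  simpa [FormalMultilinearSeries.ofScalars_apply_eq, Ring.choose_add_natCast_sub_one, poch,
    mul_comm] using h

theorem hasSum_choose_mul_pow (σ : ℝ) {x : ℝ} (hx : |x| < 1) :
    HasSum (fun n : ℕ => Ring.choose (σ + n - 1) n * x ^ n) (1 / (1 - x) ^ σ) := by
  have h := (Real.one_div_one_sub_rpow_hasFPowerSeriesOnBall_zero σ).hasSum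
    (y := x) (by simpa [enorm_eq_nnnorm, ← NNReal.coe_lt_one] using hx)
  simpa [FormalMultilinearSeries.ofScalars_apply_eq, mul_comm] using h

theorem tendsto_one_div_one_sub_rpow {σ : ℝ} (hσ : 0 < σ) :
    Tendsto (fun x : ℝ => 1 / (1 - x) ^ σ) (𝓝[<] 1) atTop := by
  have h : Tendsto (fun x : ℝ => 1 - x) (𝓝[<] 1) (𝓝[>] 0) := by
    refine tendsto_nhdsWithin_iff.mpr ⟨?_, eventually_nhdsWithin_of_forall fun x hx => ?_⟩
    · simpa using (tendsto_id.const_sub (1 : ℝ)).mono_left (nhdsWithin_le_nhds (a := 1))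
    · exact sub_pos.mpr (Set.mem_Iio.mp hx)
  refine ((tendsto_rpow_neg_nhdsGT_zero (neg_lt_zero.mpr hσ)).comp h).congr' ?_
  filter_upwards [Ioo_mem_nhdsLT one_pos] with x hx
  simp [Real.rpow_neg (sub_pos.mpr hx.2).le]

theorem norm_one_sub_cpow {x : ℝ} (hx : x < 1) (s : ℂ) :
    ‖(1 - (x : ℂ)) ^ s‖ = (1 - x) ^ s.re := by
  rw [← Complex.norm_cpow_eq_rpow_re_of_pos (sub_pos.mpr hx)]
  push_cast
  rfl

theorem norm_tsum_mul_pow_le {d : ℕ → ℝ} {e : ℕ → ℂ} {ε : ℝ} {N : ℕ} (hε : 0 ≤ ε)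
    (hd : ∀ n, 0 ≤ d n) (he : ∀ n ≥ N, ‖e n‖ ≤ ε * d n) {x : ℝ} (hx0 : 0 ≤ x) (hx1 : x ≤ 1)
    (hsum : Summable fun n => d n * x ^ n) :
    ‖∑' n, e n * (x : ℂ) ^ n‖ ≤ ∑ n ∈ Finset.range N, ‖e n‖ + ε * ∑' n, d n * x ^ n := by
  have hnorm : ∀ n, ‖e n * (x : ℂ) ^ n‖ = ‖e n‖ * x ^ n := fun n => by
    rw [norm_mul, norm_pow, Complex.norm_real, Real.norm_of_nonneg hx0]
  have htail : ∀ n ≥ N, ‖e n * (x : ℂ) ^ n‖ ≤ ε * (d n * x ^ n) := fun n hn => by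
    rw [hnorm, ← mul_assoc]
    exact mul_le_mul_of_nonneg_right (he n hn) (by positivity)
  have hs : Summable fun n => ‖e n * (x : ℂ) ^ n‖ :=
    .of_norm_bounded_eventually_nat (hsum.mul_left ε) (eventually_atTop.mpr
      ⟨N, fun n hn => (norm_norm (e n * (x : ℂ) ^ n)).symm ▸ htail n hn⟩)
  calc ‖∑' n, e n * (x : ℂ) ^ n‖
      ≤ ∑' n, ‖e n * (x : ℂ) ^ n‖ := norm_tsum_le_tsum_norm hs
    _ = ∑ n ∈ Finset.range N, ‖e n * (x : ℂ) ^ n‖ + ∑' n, ‖e (n + N) * (x : ℂ) ^ (n + N)‖ :=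
        (hs.sum_add_tsum_nat_add N).symm
    _ ≤ ∑ n ∈ Finset.range N, ‖e n‖ + ∑' n, ε * (d (n + N) * x ^ (n + N)) := by
        gcongr with n
        · rw [hnorm]
          exact mul_le_of_le_one_right (norm_nonneg _) (pow_le_one₀ hx0 hx1)
        · exact (summable_nat_add_iff N).mpr hs
        · exact (summable_nat_add_iff N).mpr (hsum.mul_left ε)
        · exact htail _ (Nat.le_add_left N n)
    _ ≤ ∑ n ∈ Finset.range N, ‖e n‖ + ε * ∑' n, d n * x ^ n := by
        rw [tsum_mul_left]
        exact add_le_add_right (mul_le_mul_of_nonneg_left (tsum_comp_le_tsum_of_inj hsum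
          (fun n => mul_nonneg (hd n) (by positivity)) (add_left_injective N)) hε) _

theorem isLittleO_tsum_mul_pow {d : ℕ → ℝ} {e : ℕ → ℂ} (hd : ∀ n, 0 ≤ d n)
    (he : e =o[atTop] d) (hsum : ∀ x ∈ Set.Ioo (0 : ℝ) 1, Summable fun n => d n * x ^ n)
    (hD : Tendsto (fun x : ℝ => ∑' n, d n * x ^ n) (𝓝[<] 1) atTop) :
    (fun x : ℝ => ∑' n, e n * (x : ℂ) ^ n) =o[𝓝[<] 1] fun x => ∑' n, d n * x ^ n := by
  refine isLittleO_iff.mpr fun ε hε => ?_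
  obtain ⟨N, hN⟩ := eventually_atTop.mp (he.def (half_pos hε))
  set C := ∑ n ∈ Finset.range N, ‖e n‖
  filter_upwards [Ioo_mem_nhdsLT one_pos, hD.eventually_ge_atTop (2 * C / ε)] with x hx hCx
  have hbound := norm_tsum_mul_pow_le (half_pos hε).le hd
    (fun n hn => (Real.norm_of_nonneg (hd n)) ▸ hN n hn) hx.1.le hx.2.le (hsum x hx)
  have hC : C ≤ ε / 2 * ∑' n, d n * x ^ n := by
    rw [div_le_iff₀ hε] at hCx
    linarith
  rw [Real.norm_of_nonneg (tsum_nonneg fun n => mul_nonneg (hd n) (pow_nonneg hx.1.le n))]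
  linarith

theorem summable_mul_pow_of_isBigO {d : ℕ → ℝ} {e : ℕ → ℂ} (he : e =O[atTop] d) {x : ℝ}
    (hsum : Summable fun n => d n * x ^ n) : Summable fun n => e n * (x : ℂ) ^ n :=
  summable_of_isBigO_nat hsum (he.mul (isBigO_of_le _ fun n => by simp))

theorem tendsto_one_sub_cpow_mul_tsum_of_isLittleO {s : ℂ} (hs : 0 < s.re) {e : ℕ → ℂ}
    (he : e =o[atTop] fun n => Ring.choose (s.re + n - 1) n) :
    Tendsto (fun x : ℝ => (1 - (x : ℂ)) ^ s * ∑' n, e n * (x : ℂ) ^ n) (𝓝[<] 1) (𝓝 0) := by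
  have hsum : ∀ x ∈ Set.Ioo (0 : ℝ) 1,
      HasSum (fun n : ℕ => Ring.choose (s.re + n - 1) n * x ^ n) (1 / (1 - x) ^ s.re) :=
    fun x hx => hasSum_choose_mul_pow s.re (abs_lt.mpr ⟨by linarith [hx.1], hx.2⟩)
  have hD : ∀ᶠ x in 𝓝[<] (1 : ℝ),
      1 / (1 - x) ^ s.re = ∑' n : ℕ, Ring.choose (s.re + n - 1) n * x ^ n := by
    filter_upwards [Ioo_mem_nhdsLT one_pos] with x hx
    exact (hsum x hx).tsum_eq.symm
  have hlittle := isLittleO_tsum_mul_pow (fun n => (choose_add_natCast_sub_one_pos hs n).le) he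
    (fun x hx => (hsum x hx).summable) ((tendsto_one_div_one_sub_rpow hs).congr' hD)
  refine tendsto_zero_iff_norm_tendsto_zero.mpr
    (hlittle.norm_left.tendsto_div_nhds_zero.congr' ?_)
  filter_upwards [hD, Ioo_mem_nhdsLT one_pos] with x hxD hx
  rw [← hxD, norm_mul, norm_one_sub_cpow hx.2, div_div_eq_mul_div, div_one, mul_comm]

theorem tendsto_one_sub_cpow_mul_tsum {s L : ℂ} (hs : 0 < s.re) {f : ℕ → ℂ}
    (hf : Tendsto (fun n => f n / (poch s n / n.factorial)) atTop (𝓝 L)) :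
    Tendsto (fun x : ℝ => (1 - (x : ℂ)) ^ s * ∑' n, f n * (x : ℂ) ^ n) (𝓝[<] 1) (𝓝 L) := by
  set g : ℕ → ℂ := fun n => poch s n / n.factorial
  have hg : ∀ n, g n ≠ 0 := fun n =>
    div_ne_zero (poch_ne_zero (ne_neg_natCast_of_re_pos hs) n)
      (Nat.cast_ne_zero.mpr n.factorial_ne_zero)
  have he : (fun n => f n - L * g n) =o[atTop] fun n => Ring.choose (s.re + n - 1) n := by
    have := ((isLittleO_one_iff ℝ).mpr (tendsto_sub_nhds_zero_iff.mpr hf)).mul_isBigO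
      (isBigO_poch_div_factorial hs)
    simp only [one_mul] at this
    refine this.congr_left fun n => ?_
    rw [sub_mul, div_mul_cancel₀ _ (hg n)]
  refine (add_zero L ▸ (tendsto_one_sub_cpow_mul_tsum_of_isLittleO hs he).const_add L).congr' ?_
  filter_upwards [Ioo_mem_nhdsLT one_pos] with x hx
  have hx' : ‖(x : ℂ)‖ < 1 := by rw [Complex.norm_real, Real.norm_of_nonneg hx.1.le]; exact hx.2
  have hE := summable_mul_pow_of_isBigO he.isBigO
    (hasSum_choose_mul_pow s.re (abs_lt.mpr ⟨by linarith [hx.1], hx.2⟩)).summable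
  have hsplit : HasSum (fun n => f n * (x : ℂ) ^ n)
      (L * (1 / (1 - (x : ℂ)) ^ s) + ∑' n, (f n - L * g n) * (x : ℂ) ^ n) := by
    refine (((hasSum_poch_div_factorial_mul_pow s hx').mul_left L).add hE.hasSum).congr_fun
      fun n => ?_
    ring
  have hne : (1 - (x : ℂ)) ^ s ≠ 0 := by
    rw [← norm_ne_zero_iff, norm_one_sub_cpow hx.2]
    exact (Real.rpow_pos_of_pos (sub_pos.mpr hx.2) _).ne'
  rw [hsplit.tsum_eq]
  field_simp

theorem stmt7_general (a b c : ℂ) (habc : 0 < (a + b - c).re)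
    (ha : ∀ m : ℕ, a ≠ -(m : ℂ)) (hb : ∀ m : ℕ, b ≠ -(m : ℂ)) :
    Filter.Tendsto (fun x : ℝ => ((1 : ℂ) - (x : ℂ)) ^ (a + b - c) * hyp a b c (x : ℂ))
      (nhdsWithin 1 (Set.Iio 1))
      (nhds (Complex.Gamma c * Complex.Gamma (a + b - c) /
        (Complex.Gamma a * Complex.Gamma b))) :=
  tendsto_one_sub_cpow_mul_tsum habc (tendsto_hyp_coeff_div ha hb c)

theorem stmt7 (a b c : ℂ) (hc : ∀ m : ℕ, c ≠ -(m : ℂ)) (habc : 0 < (a + b - c).re)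
    (ha : ∀ m : ℕ, a ≠ -(m : ℂ)) (hb : ∀ m : ℕ, b ≠ -(m : ℂ)) :
    Filter.Tendsto (fun x : ℝ => ((1 : ℂ) - (x : ℂ)) ^ (a + b - c) * hyp a b c (x : ℂ))
      (nhdsWithin 1 (Set.Iio 1))
      (nhds (Complex.Gamma c * Complex.Gamma (a + b - c) /
        (Complex.Gamma a * Complex.Gamma b))) :=
  stmt7_general a b c habc ha hb
end

section
/- For Re λ > 0 and j ∈ λ - ρ + ℕ (so that λ-ρ+1-j ∈ -ℕ₀), the function φ_{λ,j}(t) = (cosh t)^{-λ-ρ} F(λ+ρ+j, λ-ρ+1-j; 1+λ; (1+e^{2t})^{-1}) belongs to L²(ℝ, cosh^{n-1}t dt). -/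
/-! Since `λ - ρ + 1 - j = -m` with `m ∈ ℕ`, the hypergeometric series terminates: it is a
polynomial in `x`, hence bounded by some `C` on the unit disc, and `(1 + e^{2t})⁻¹` stays in
`[0, 1]`. Therefore
`|φ(t)|² cosh^{n-1} t ≤ C² cosh^{-2 Re λ - 2ρ + n - 1} t = C² cosh^{-2 Re λ} t`,
and `cosh^{-a}` is integrable on `ℝ` for every `a > 0`, as it decays like `e^{-a|t|}`. -/

open MeasureTheory Real Finset Asymptotics

section Terminating

variable {a b c : ℂ} {m : ℕ}

lemma hyp_eq_sum_of_eq_neg_nat (hb : b = -(m : ℂ)) (x : ℂ) :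
    hyp a b c x =
      ∑ k ∈ range (m + 1), poch a k * poch b k / (k.factorial * poch c k) * x ^ k := by
  refine tsum_eq_sum fun k hk => ?_
  have hbk : poch b k = 0 := by
    rw [hb, poch]
    exact ascPochhammer_eval_neg_coe_nat_of_lt (by simpa using hk)
  rw [hbk, mul_zero, zero_div, zero_mul]

lemma continuous_hyp_of_eq_neg_nat (hb : b = -(m : ℂ)) : Continuous (hyp a b c) := by
  rw [funext (hyp_eq_sum_of_eq_neg_nat (a := a) (c := c) hb)]
  fun_prop

lemma exists_norm_hyp_le_of_eq_neg_nat (hb : b = -(m : ℂ)) :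
    ∃ C, ∀ x : ℂ, ‖x‖ ≤ 1 → ‖hyp a b c x‖ ≤ C := by
  refine ⟨∑ k ∈ range (m + 1), ‖poch a k * poch b k / (k.factorial * poch c k)‖,
    fun x hx => ?_⟩
  rw [hyp_eq_sum_of_eq_neg_nat hb]
  refine (norm_sum_le _ _).trans (sum_le_sum fun k _ => ?_)
  rw [norm_mul, norm_pow]
  exact mul_le_of_le_one_right (norm_nonneg _) (pow_le_one₀ (norm_nonneg _) hx)

end Terminating

lemma norm_inv_one_add_exp_le_one (t : ℝ) : ‖(((1 + exp t)⁻¹ : ℝ) : ℂ)‖ ≤ 1 := by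
  rw [Complex.norm_real, norm_eq_abs, abs_of_pos (by positivity)]
  exact inv_le_one_of_one_le₀ (le_add_of_nonneg_right (exp_pos t).le)

lemma sq_norm_cpow_mul_mul_rpow_le {r C s : ℝ} {z w : ℂ} (hr : 0 < r) (hw : ‖w‖ ≤ C) :
    ‖(r : ℂ) ^ z * w‖ ^ 2 * r ^ s ≤ C ^ 2 * r ^ (2 * z.re + s) := by
  have hrz : ‖(r : ℂ) ^ z‖ = r ^ z.re := Complex.norm_cpow_eq_rpow_re_of_pos hr z
  calc ‖(r : ℂ) ^ z * w‖ ^ 2 * r ^ s = ‖w‖ ^ 2 * (r ^ z.re * r ^ z.re * r ^ s) := by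
        rw [norm_mul, hrz]; ring
    _ ≤ C ^ 2 * (r ^ z.re * r ^ z.re * r ^ s) := by gcongr
    _ = C ^ 2 * r ^ (2 * z.re + s) := by
        rw [← rpow_add hr, ← rpow_add hr, two_mul]

lemma integrable_cosh_rpow_neg {a : ℝ} (ha : 0 < a) :
    Integrable (fun t : ℝ => cosh t ^ (-a)) := by
  have hcont : Continuous (fun t : ℝ => cosh t ^ (-a)) :=
    continuous_cosh.rpow_const fun t => Or.inl (cosh_pos t).ne'
  refine hcont.locallyIntegrable.integrable_of_isBigO_atTop_of_norm_isNegInvariant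
    (g := fun t => exp (-a * t)) (ae_of_all _ fun t => by simp [cosh_neg]) ?_
    ⟨Set.Ioi 0, Filter.Ioi_mem_atTop 0, exp_neg_integrableOn_Ioi 0 ha⟩
  refine IsBigO.of_bound (2 ^ a) (Filter.Eventually.of_forall fun t => ?_)
  have hexp_le : exp t / 2 ≤ cosh t := by
    rw [cosh_eq]
    linarith [exp_pos (-t)]
  rw [norm_of_nonneg (rpow_nonneg (cosh_pos t).le _), norm_of_nonneg (exp_pos _).le]
  calc cosh t ^ (-a) ≤ (exp t / 2) ^ (-a) :=
        rpow_le_rpow_of_nonpos (by positivity) hexp_le (by linarith)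
    _ = 2 ^ a * exp (-a * t) := by
        rw [div_rpow (exp_pos t).le zero_le_two, ← exp_mul, rpow_neg zero_le_two, div_inv_eq_mul,
          mul_comm t, mul_comm]

theorem stmt12_general (n : ℕ) (ρ : ℝ) (hρ : ρ = (n - 1) / 2)
    (lam : ℂ) (hre : 0 < lam.re)
    (j : ℕ) (hj : ∃ m : ℕ, lam - ρ + 1 - j = -(m : ℂ))
    (φ : ℝ → ℂ)
    (hφ : φ = fun t => ((Real.cosh t : ℂ)) ^ (-lam - ρ) *
      hyp (lam + ρ + j) (lam - ρ + 1 - j) (1 + lam) (((1 + Real.exp (2*t))⁻¹ : ℝ))) :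
    MeasureTheory.Integrable (fun t : ℝ => ‖φ t‖ ^ 2 * Real.cosh t ^ ((n : ℝ) - 1)) := by
  obtain ⟨m, hm⟩ := hj
  obtain ⟨C, hC⟩ := exists_norm_hyp_le_of_eq_neg_nat (a := lam + ρ + j) (c := 1 + lam) hm
  have hφ_cont : Continuous φ := by
    rw [hφ]
    refine Continuous.mul ?_ ((continuous_hyp_of_eq_neg_nat hm).comp ?_)
    · exact (Complex.continuous_ofReal.comp continuous_cosh).cpow continuous_const
        fun t => Complex.ofReal_mem_slitPlane.mpr (cosh_pos t)
    · fun_prop (disch := exact fun t => by positivity)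
  have hexp : 2 * (-lam - ρ).re + ((n : ℝ) - 1) = -(2 * lam.re) := by
    simp only [Complex.sub_re, Complex.neg_re, Complex.ofReal_re, hρ]
    ring
  have hbound : ∀ t : ℝ,
      ‖‖φ t‖ ^ 2 * cosh t ^ ((n : ℝ) - 1)‖ ≤ C ^ 2 * cosh t ^ (-(2 * lam.re)) := by
    intro t
    rw [norm_of_nonneg (by positivity), ← hexp, hφ]
    exact sq_norm_cpow_mul_mul_rpow_le (cosh_pos t) (hC _ (norm_inv_one_add_exp_le_one _))
  have hcont : Continuous fun t : ℝ => ‖φ t‖ ^ 2 * cosh t ^ ((n : ℝ) - 1) :=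
    (hφ_cont.norm.pow 2).mul (continuous_cosh.rpow_const fun t => Or.inl (cosh_pos t).ne')
  exact ((integrable_cosh_rpow_neg (by linarith : 0 < 2 * lam.re)).const_mul _).mono'
    hcont.aestronglyMeasurable (ae_of_all _ hbound)

theorem stmt12 (n : ℕ) (hn : 3 ≤ n) (ρ : ℝ) (hρ : ρ = (n - 1) / 2)
    (lam : ℂ) (hre : 0 < lam.re) (hlam : ∀ m : ℕ, lam ≠ -((m : ℂ) + 1))
    (j : ℕ) (hj : ∃ m : ℕ, lam - ρ + 1 - j = -(m : ℂ))
    (φ : ℝ → ℂ)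
    (hφ : φ = fun t => ((Real.cosh t : ℂ)) ^ (-lam - ρ) *
      hyp (lam + ρ + j) (lam - ρ + 1 - j) (1 + lam) (((1 + Real.exp (2*t))⁻¹ : ℝ))) :
    MeasureTheory.Integrable (fun t : ℝ => ‖φ t‖ ^ 2 * Real.cosh t ^ ((n : ℝ) - 1)) :=
  stmt12_general n ρ hρ lam hre j hj φ hφ
end

section
/- For each nonnegative integer j, and λ ∉ -ℕ, the function φ_{λ,j}(t) = (cosh t)^{-λ-ρ} F(λ+ρ+j, λ-ρ+1-j; 1+λ; (1+e^{2t})^{-1}) satisfies the ODE φ'' + 2ρ tanh(t) φ' + (j(j+n-2)/cosh²t) φ = (λ²-ρ²) φ on ℝ. -/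
/-!
With `x = (1 + e^{2t})⁻¹ = (1 - tanh t) / 2` one has `tanh t = 1 - 2x`, `cosh⁻² t = 4x(1-x)` and
`dx/dt = -2x(1-x)`, so `d/dt (cosh^e t · H(x)) = cosh^e t · (e(1-2x) H - 2x(1-x) H')(x)`.
Applying this rule twice turns the radial operator, applied to `cosh^{-λ-ρ} t · G(x)`, into
`cosh^{-λ-ρ} t · 4x(1-x)` times the hypergeometric operator `x(1-x)G'' + (c-(a+b+1)x)G' - abG`
with `a = λ+ρ+j`, `b = λ-ρ+1-j`, `c = 1+λ`. On the unit disc `F(a,b;c;·)` is annihilated by that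
operator: `F' = (ab/c) F(a+1,b+1;c+1;·)`, and the Taylor coefficients satisfy
`(m+1)(m+c) f_{m+1} = (m+a)(m+b) f_m`.
-/

open Filter Topology

lemma HasSum.mul_left_of_shift {R : Type*} [CommRing R] [TopologicalSpace R] [IsTopologicalRing R]
    {g g' : ℕ → R} {x s : R} (h : HasSum (fun m => g m * x ^ m) s)
    (h0 : g' 0 = 0) (hsucc : ∀ m, g' (m + 1) = g m) :
    HasSum (fun m => g' m * x ^ m) (x * s) := by
  rw [← hasSum_nat_add_iff' 1]
  simpa [h0, hsucc, pow_succ, mul_comm, mul_left_comm, mul_assoc] using h.mul_left x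

lemma poch_succ_right (a : ℂ) (m : ℕ) : poch a (m + 1) = poch a m * (a + m) :=
  ascPochhammer_succ_eval m a

lemma poch_succ_left (a : ℂ) (m : ℕ) : poch a (m + 1) = a * poch (a + 1) m := by
  simp [poch, ascPochhammer_succ_left]

lemma poch_ne_zero_s16 {c : ℂ} (hc : ∀ k : ℕ, c ≠ -k) (m : ℕ) : poch c m ≠ 0 := by
  rw [poch, ne_eq, ascPochhammer_eval_eq_zero_iff]
  rintro ⟨k, -, hk⟩
  exact hc k (by rw [hk, neg_neg])

lemma add_natCast_ne_zero {c : ℂ} (hc : ∀ k : ℕ, c ≠ -k) (m : ℕ) : c + m ≠ 0 :=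
  fun h => hc m (eq_neg_of_add_eq_zero_left h)

lemma add_one_ne_neg_natCast {c : ℂ} (hc : ∀ k : ℕ, c ≠ -k) (k : ℕ) : c + 1 ≠ -k :=
  fun h => hc (k + 1) (by push_cast; linear_combination h)

noncomputable def hypCoeff (a b c : ℂ) (m : ℕ) : ℂ :=
  poch a m * poch b m / (m.factorial * poch c m)

section Hypergeometric

variable {a b c : ℂ}

lemma hypCoeff_succ_mul (hc : ∀ k : ℕ, c ≠ -k) (m : ℕ) :
    hypCoeff a b c (m + 1) * ((m + 1) * (c + m)) = hypCoeff a b c m * ((a + m) * (b + m)) := by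
  have := poch_ne_zero_s16 hc m
  have := add_natCast_ne_zero hc m
  have : (m.factorial : ℂ) ≠ 0 := by exact_mod_cast m.factorial_ne_zero
  simp only [hypCoeff, poch_succ_right, Nat.factorial_succ]
  push_cast
  field_simp

lemma succ_mul_hypCoeff_succ (hc : ∀ k : ℕ, c ≠ -k) (m : ℕ) :
    (m + 1) * hypCoeff a b c (m + 1) = a * b / c * hypCoeff (a + 1) (b + 1) (c + 1) m := by
  have : c ≠ 0 := by simpa using hc 0
  have := poch_ne_zero_s16 (add_one_ne_neg_natCast hc) m
  have : (m.factorial : ℂ) ≠ 0 := by exact_mod_cast m.factorial_ne_zero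
  simp only [hypCoeff, poch_succ_left, Nat.factorial_succ]
  push_cast
  field_simp

lemma tendsto_hypCoeff_ratio (a b c : ℂ) :
    Tendsto (fun m : ℕ => (a + m) * (b + m) / ((m + 1) * (c + m))) atTop (𝓝 1) := by
  have h := (tendsto_add_mul_div_add_mul_atTop_nhds a 1 1 one_ne_zero).mul
    (tendsto_add_mul_div_add_mul_atTop_nhds b c 1 one_ne_zero)
  simp only [one_mul, div_one, mul_one] at h
  refine h.congr fun m => ?_
  rw [mul_div_mul_comm, add_comm 1 (m : ℂ)]

lemma summable_norm_hypCoeff_mul_pow (hc : ∀ k : ℕ, c ≠ -k) {r : ℝ} (hr0 : 0 ≤ r)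
    (hr1 : r < 1) : Summable fun m => ‖hypCoeff a b c m‖ * r ^ m := by
  refine summable_of_ratio_norm_eventually_le (r := (1 + r) / 2) (by linarith) ?_
  have hlim : Tendsto (fun m : ℕ => ‖(a + m) * (b + m) / ((m + 1) * (c + m))‖ * r)
      atTop (𝓝 r) := by
    simpa using (tendsto_hypCoeff_ratio a b c).norm.mul_const r
  filter_upwards [hlim.eventually_le_const (by linarith : r < (1 + r) / 2)] with m hm
  have hden : ((m : ℂ) + 1) * (c + m) ≠ 0 :=
    mul_ne_zero (Nat.cast_add_one_ne_zero m) (add_natCast_ne_zero hc m)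
  have hrec : hypCoeff a b c (m + 1)
      = hypCoeff a b c m * ((a + m) * (b + m) / ((m + 1) * (c + m))) := by
    rw [mul_div_assoc', eq_div_iff hden, hypCoeff_succ_mul hc]
  rw [Real.norm_of_nonneg (by positivity), Real.norm_of_nonneg (by positivity), hrec, norm_mul,
    pow_succ]
  calc ‖hypCoeff a b c m‖ * ‖(a + m) * (b + m) / ((m + 1) * (c + m))‖ * (r ^ m * r)
      = (‖(a + m) * (b + m) / ((m + 1) * (c + m))‖ * r) * (‖hypCoeff a b c m‖ * r ^ m) := by
        ring
    _ ≤ (1 + r) / 2 * (‖hypCoeff a b c m‖ * r ^ m) := by gcongr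

lemma hasSum_hyp (hc : ∀ k : ℕ, c ≠ -k) {x : ℂ} (hx : ‖x‖ < 1) :
    HasSum (fun m => hypCoeff a b c m * x ^ m) (hyp a b c x) := by
  refine Summable.hasSum (Summable.of_norm ?_)
  simpa only [norm_mul, norm_pow] using summable_norm_hypCoeff_mul_pow hc (norm_nonneg x) hx

lemma hasSum_succ_mul_hypCoeff_succ (hc : ∀ k : ℕ, c ≠ -k) {x : ℂ} (hx : ‖x‖ < 1) :
    HasSum (fun m => (m + 1) * hypCoeff a b c (m + 1) * x ^ m)
      (a * b / c * hyp (a + 1) (b + 1) (c + 1) x) := by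
  simpa only [succ_mul_hypCoeff_succ hc, mul_assoc] using
    (hasSum_hyp (add_one_ne_neg_natCast hc) hx).mul_left (a * b / c)

theorem hasDerivAt_hyp (hc : ∀ k : ℕ, c ≠ -k) {x : ℂ} (hx : ‖x‖ < 1) :
    HasDerivAt (hyp a b c) (a * b / c * hyp (a + 1) (b + 1) (c + 1) x) x := by
  obtain ⟨r, hxr, hr1⟩ := exists_between hx
  have hu := summable_norm_hypCoeff_mul_pow (a := a) (b := b) hc ((norm_nonneg x).trans hxr.le) hr1
  have hterm : ∀ m, DifferentiableOn ℂ (fun w => hypCoeff a b c m * w ^ m) (Metric.ball 0 r) :=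
    fun m => ((differentiable_pow m).const_mul _).differentiableOn
  have hbound : ∀ m, ∀ w ∈ Metric.ball (0 : ℂ) r,
      ‖hypCoeff a b c m * w ^ m‖ ≤ ‖hypCoeff a b c m‖ * r ^ m := by
    intro m w hw
    rw [norm_mul, norm_pow]
    gcongr
    exact (mem_ball_zero_iff.mp hw).le
  have hxball : x ∈ Metric.ball (0 : ℂ) r := mem_ball_zero_iff.mpr hxr
  have hdiff : DifferentiableAt ℂ (hyp a b c) x :=
    (Complex.differentiableOn_tsum_of_summable_norm hu hterm Metric.isOpen_ball
      hbound).differentiableAt (Metric.isOpen_ball.mem_nhds hxball)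
  have hderiv := Complex.hasSum_deriv_of_summable_norm hu hterm Metric.isOpen_ball hbound hxball
  have hshift : HasSum (fun m => deriv (fun w => hypCoeff a b c m * w ^ m) x)
      (a * b / c * hyp (a + 1) (b + 1) (c + 1) x) := by
    rw [← hasSum_nat_add_iff' 1]
    simpa [deriv_const_mul_field', mul_comm, mul_left_comm, mul_assoc] using
      hasSum_succ_mul_hypCoeff_succ hc hx
  exact hshift.unique hderiv ▸ hdiff.hasDerivAt

lemma differentiableOn_hyp (hc : ∀ k : ℕ, c ≠ -k) :
    DifferentiableOn ℂ (hyp a b c) (Metric.ball 0 1) := fun _ hx =>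
  (hasDerivAt_hyp hc (mem_ball_zero_iff.mp hx)).differentiableAt.differentiableWithinAt

lemma hasSum_deriv_hyp (hc : ∀ k : ℕ, c ≠ -k) {x : ℂ} (hx : ‖x‖ < 1) :
    HasSum (fun m => (m + 1) * hypCoeff a b c (m + 1) * x ^ m) (deriv (hyp a b c) x) :=
  (hasDerivAt_hyp hc hx).deriv ▸ hasSum_succ_mul_hypCoeff_succ hc hx

lemma hasSum_deriv_deriv_hyp (hc : ∀ k : ℕ, c ≠ -k) {x : ℂ} (hx : ‖x‖ < 1) :
    HasSum (fun m => (m + 1) * (m + 2) * hypCoeff a b c (m + 2) * x ^ m)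
      (deriv (deriv (hyp a b c)) x) := by
  have hc' := add_one_ne_neg_natCast hc
  have hnhds :
      deriv (hyp a b c) =ᶠ[𝓝 x] fun w => a * b / c * hyp (a + 1) (b + 1) (c + 1) w := by
    filter_upwards [Metric.isOpen_ball.mem_nhds (mem_ball_zero_iff.mpr hx)] with w hw
    exact (hasDerivAt_hyp hc (mem_ball_zero_iff.mp hw)).deriv
  rw [hnhds.deriv_eq, deriv_const_mul _ (hasDerivAt_hyp hc' hx).differentiableAt]
  refine ((hasSum_deriv_hyp hc' hx).mul_left (a * b / c)).congr_fun fun m => ?_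
  have h := succ_mul_hypCoeff_succ (a := a) (b := b) hc (m + 1)
  push_cast at h
  linear_combination ((m + 1) * x ^ m) * h

theorem hyp_ode (hc : ∀ k : ℕ, c ≠ -k) {x : ℂ} (hx : ‖x‖ < 1) :
    x * (1 - x) * deriv (deriv (hyp a b c)) x + (c - (a + b + 1) * x) * deriv (hyp a b c) x
      - a * b * hyp a b c x = 0 := by
  have hF := hasSum_hyp (a := a) (b := b) hc hx
  have hF' := hasSum_deriv_hyp (a := a) (b := b) hc hx
  have hF'' := hasSum_deriv_deriv_hyp (a := a) (b := b) hc hx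
  have hxF' := hF'.mul_left_of_shift (g' := fun m => m * hypCoeff a b c m) (by simp)
    fun m => by push_cast; ring
  have hxF'' := hF''.mul_left_of_shift (g' := fun m => m * (m + 1) * hypCoeff a b c (m + 1))
    (by simp) fun m => by push_cast; ring
  have hxxF'' := hxF''.mul_left_of_shift (g' := fun m => (m - 1) * m * hypCoeff a b c m) (by simp)
    fun m => by push_cast; ring
  have hsum := (((hxF''.sub hxxF'').add (hF'.mul_left c)).sub (hxF'.mul_left (a + b + 1))).sub
    (hF.mul_left (a * b))
  -- `hsum` is the operator applied to the series termwise; each term vanishes by the recurrence.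
  have hzero := hsum.unique (hasSum_zero.congr_fun fun m => by
    linear_combination x ^ m * hypCoeff_succ_mul hc m)
  linear_combination hzero

end Hypergeometric

noncomputable def hypArg (t : ℝ) : ℝ := (1 + Real.exp (2 * t))⁻¹

lemma hypArg_pos (t : ℝ) : 0 < hypArg t := by unfold hypArg; positivity

lemma hypArg_lt_one (t : ℝ) : hypArg t < 1 :=
  inv_lt_one_of_one_lt₀ (lt_add_of_pos_right 1 (Real.exp_pos _))

lemma norm_hypArg_lt_one (t : ℝ) : ‖(hypArg t : ℂ)‖ < 1 := by
  rw [Complex.norm_real, Real.norm_of_nonneg (hypArg_pos t).le]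
  exact hypArg_lt_one t

lemma tanh_eq_one_sub_two_mul_hypArg (t : ℝ) : Real.tanh t = 1 - 2 * hypArg t := by
  have h := Real.exp_pos t
  rw [Real.tanh_eq_sinh_div_cosh, Real.sinh_eq, Real.cosh_eq, hypArg, Real.exp_neg,
    show 2 * t = t + t by ring, Real.exp_add]
  field_simp
  ring

lemma cosh_sq_mul_hypArg (t : ℝ) :
    Real.cosh t ^ 2 * (4 * hypArg t * (1 - hypArg t)) = 1 := by
  have h := Real.exp_pos t
  rw [Real.cosh_eq, hypArg, Real.exp_neg, show 2 * t = t + t by ring, Real.exp_add]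
  field_simp
  ring

lemma hasDerivAt_hypArg (t : ℝ) :
    HasDerivAt hypArg (-2 * hypArg t * (1 - hypArg t)) t := by
  have h := ((((hasDerivAt_id t).const_mul 2).exp).const_add 1).inv (by positivity)
  refine h.congr_deriv ?_
  simp only [hypArg, id]
  field_simp
  ring

lemma hasDerivAt_ofReal_cosh_cpow (e : ℂ) (t : ℝ) :
    HasDerivAt (fun s : ℝ => (Real.cosh s : ℂ) ^ e)
      (e * Real.tanh t * (Real.cosh t : ℂ) ^ e) t := by
  have hcosh : (Real.cosh t : ℂ) ≠ 0 := Complex.ofReal_ne_zero.mpr (Real.cosh_pos t).ne'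
  have h := ((Complex.hasStrictDerivAt_cpow_const (c := e)
    (Complex.ofReal_mem_slitPlane.2 (Real.cosh_pos t))).hasDerivAt).comp_ofReal.scomp t
    (Real.hasDerivAt_cosh t)
  refine h.congr_deriv ?_
  rw [Complex.cpow_sub _ _ hcosh, Complex.cpow_one, Real.tanh_eq_sinh_div_cosh, Complex.real_smul]
  push_cast
  field_simp

lemma hasDerivAt_cosh_cpow_mul_comp_hypArg (e : ℂ) {H : ℂ → ℂ} {H' : ℂ} {t : ℝ}
    (hH : HasDerivAt H H' (hypArg t)) :
    HasDerivAt (fun s : ℝ => (Real.cosh s : ℂ) ^ e * H (hypArg s))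
      ((Real.cosh t : ℂ) ^ e * (e * (1 - 2 * hypArg t) * H (hypArg t)
        - 2 * hypArg t * (1 - hypArg t) * H')) t := by
  have h := (hasDerivAt_ofReal_cosh_cpow e t).mul
    (hH.comp_ofReal.scomp t (hasDerivAt_hypArg t))
  refine h.congr_deriv ?_
  rw [tanh_eq_one_sub_two_mul_hypArg, Complex.real_smul, Function.comp_apply]
  push_cast
  ring

theorem radial_operator_eq_hypergeometric_operator (ρ : ℝ) (lam ν : ℂ) {G : ℂ → ℂ}
    (hG : DifferentiableOn ℂ G (Metric.ball 0 1))
    (φ : ℝ → ℂ) (hφ : φ = fun s => (Real.cosh s : ℂ) ^ (-lam - ρ) * G (hypArg s))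
    (t : ℝ) :
    deriv (deriv φ) t + ((2 * ρ * Real.tanh t : ℝ) : ℂ) * deriv φ t
        + ν * (ν + 2 * ρ - 1) / (Real.cosh t : ℂ) ^ 2 * φ t
        - (lam ^ 2 - (ρ : ℂ) ^ 2) * φ t
      = (Real.cosh t : ℂ) ^ (-lam - ρ) * (4 * hypArg t * (1 - hypArg t)) *
        (hypArg t * (1 - hypArg t) * deriv (deriv G) (hypArg t)
          + (1 + lam - 2 * (lam + 1) * hypArg t) * deriv G (hypArg t)
          - (lam + ρ + ν) * (lam - ρ + 1 - ν) * G (hypArg t)) := by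
  set e : ℂ := -lam - ρ
  have hball : ∀ s : ℝ, (hypArg s : ℂ) ∈ Metric.ball (0 : ℂ) 1 := fun s =>
    mem_ball_zero_iff.mpr (norm_hypArg_lt_one s)
  have hdG : ∀ s : ℝ, HasDerivAt G (deriv G (hypArg s)) (hypArg s) := fun s =>
    (hG.differentiableAt (Metric.isOpen_ball.mem_nhds (hball s))).hasDerivAt
  have hddG : ∀ s : ℝ, HasDerivAt (deriv G) (deriv (deriv G) (hypArg s)) (hypArg s) := fun s =>
    ((hG.deriv Metric.isOpen_ball).differentiableAt
      (Metric.isOpen_ball.mem_nhds (hball s))).hasDerivAt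
  set P : ℂ → ℂ := fun x => e * (1 - 2 * x) * G x - 2 * x * (1 - x) * deriv G x
  have hφ' : deriv φ = fun s => (Real.cosh s : ℂ) ^ e * P (hypArg s) := by
    subst hφ
    exact funext fun s => (hasDerivAt_cosh_cpow_mul_comp_hypArg e (hdG s)).deriv
  have hP : HasDerivAt P (-2 * e * G (hypArg t)
      + (e - 2) * (1 - 2 * hypArg t) * deriv G (hypArg t)
      - 2 * hypArg t * (1 - hypArg t) * deriv (deriv G) (hypArg t)) (hypArg t) := by
    have hx := hasDerivAt_id (hypArg t : ℂ)
    have h := ((((hx.const_mul 2).const_sub 1).const_mul e).mul (hdG t)).sub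
      (((hx.const_mul 2).mul (hx.const_sub 1)).mul (hddG t))
    refine h.congr_deriv ?_
    simp only [id, Pi.mul_apply]
    ring
  have hφ'' := hasDerivAt_cosh_cpow_mul_comp_hypArg e hP
  rw [← hφ'] at hφ''
  have hcosh : ((Real.cosh t : ℂ) ^ 2)⁻¹ = 4 * hypArg t * (1 - hypArg t) := by
    rw [inv_eq_of_mul_eq_one_right]
    exact_mod_cast cosh_sq_mul_hypArg t
  rw [hφ''.deriv, hφ', hφ, tanh_eq_one_sub_two_mul_hypArg, div_eq_mul_inv]
  simp only [P, e, hcosh]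
  push_cast
  ring

theorem stmt16_general (n : ℕ) (ρ : ℝ) (hρ : ρ = (n - 1) / 2)
    (lam : ℂ) (hlam : ∀ m : ℕ, lam ≠ -((m : ℂ) + 1)) (j : ℕ)
    (φ : ℝ → ℂ)
    (hφ : φ = fun t => ((Real.cosh t : ℂ)) ^ (-lam - ρ) *
      hyp (lam + ρ + j) (lam - ρ + 1 - j) (1 + lam) (((1 + Real.exp (2*t))⁻¹ : ℝ))) :
    ∀ t : ℝ, deriv (deriv φ) t
        + ((2 * ρ * Real.tanh t : ℝ) : ℂ) * deriv φ t
        + ((j * (j + n - 2) : ℂ) / ((Real.cosh t : ℂ)) ^ 2) * φ t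
      = (lam ^ 2 - (ρ : ℂ) ^ 2) * φ t := by
  intro t
  have hc : ∀ k : ℕ, 1 + lam ≠ -k := fun k h => hlam k (by linear_combination h)
  have hn : (j * (j + n - 2) : ℂ) = j * (j + 2 * ρ - 1) := by rw [hρ]; push_cast; ring
  rw [hn]
  linear_combination radial_operator_eq_hypergeometric_operator ρ lam j (differentiableOn_hyp hc)
      φ hφ t
    + (Real.cosh t : ℂ) ^ (-lam - ρ) * (4 * hypArg t * (1 - hypArg t))
      * hyp_ode hc (norm_hypArg_lt_one t)

theorem stmt16 (n : ℕ) (hn : 3 ≤ n) (ρ : ℝ) (hρ : ρ = (n - 1) / 2)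
    (lam : ℂ) (hlam : ∀ m : ℕ, lam ≠ -((m : ℂ) + 1)) (j : ℕ)
    (φ : ℝ → ℂ)
    (hφ : φ = fun t => ((Real.cosh t : ℂ)) ^ (-lam - ρ) *
      hyp (lam + ρ + j) (lam - ρ + 1 - j) (1 + lam) (((1 + Real.exp (2*t))⁻¹ : ℝ))) :
    ∀ t : ℝ, deriv (deriv φ) t
        + ((2 * ρ * Real.tanh t : ℝ) : ℂ) * deriv φ t
        + ((j * (j + n - 2) : ℂ) / ((Real.cosh t : ℂ)) ^ 2) * φ t
      = (lam ^ 2 - (ρ : ℂ) ^ 2) * φ t :=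
  stmt16_general n ρ hρ lam hlam j φ hφ
end
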